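/- Scoring mechanisms approximately maximize population score: Suppose the issue set 𝓘 is finite. For every B > 0 there is a constant c > 0 depending only on B with the following property. For every scoring rule s with |s| ≤ B, every ε > 0 and δ ∈ (0,1), and every sample size m ≥ (c/ε²)·(|𝓘|·N·log N + log(1/δ)), with probability at least 1 − δ over an i.i.d. sample S of size m, U^s(f_s(S)) ≥ sup_{C ∈ 𝓒} U^s(C) − 2ε. -/

import Mathlib

open scoped ENNReal

noncomputable section

/-- Linear orders on `[N] = {1,…,N}` (as `Fin N`), encoded as permutations:
`o.symm c` is the rank of outcome `c` (smaller rank = more preferred). -/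
abbrev LO (N : ℕ) := Equiv.Perm (Fin N)

/-- `c ≻_o c'` : outcome `c` is strictly preferred to `c'` under the linear order `o`. -/
def prefers {N : ℕ} (o : LO N) (c c' : Fin N) : Prop := o.symm c < o.symm c'

/-- `o ⊙ σ` : the linear order with `s₁ ≻_{o⊙σ} s₂` iff `σ⁻¹ s₁ ≻_o σ⁻¹ s₂`. -/
def odot {N : ℕ} (o σ : LO N) : LO N := o.trans σ

/-- `C ⊙ᵢ σ` : apply `σ` to the ordering of issue `i`, leaving other issues unchanged. -/
def odotProfile {I : Type*} [DecidableEq I] {N : ℕ} (C : I → LO N) (i : I) (σ : LO N) :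
    I → LO N :=
  Function.update C i (odot (C i) σ)

/-- The distribution of `m` i.i.d. draws from `p`. -/
def iidPMF {α : Type*} (p : PMF α) : (m : ℕ) → PMF (Fin m → α)
  | 0 => PMF.pure (fun i => i.elim0)
  | (m + 1) => p.bind fun a => (iidPMF p m).map (fun f => Fin.cons a f)

/-- Probability of an event under a PMF. -/
def prob {α : Type*} (p : PMF α) (s : Set α) : ℝ≥0∞ := p.toOuterMeasure s

/-- Distribution of one sampled individual-issue pair: `i ~ 𝓓_𝓘`, then `o ~ 𝓜(i)`. -/
def sampleDist {I : Type*} {N : ℕ} (DI : PMF I) (M : I → PMF (LO N)) : PMF (LO N × I) :=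
  DI.bind fun i => (M i).map fun o => (o, i)

/-- Sample score of profile `C` on sample `S` under scoring rule `s`. -/
def sampleScore {I : Type*} {N : ℕ} (s : LO N → LO N → ℝ) {m : ℕ}
    (S : Fin m → LO N × I) (C : I → LO N) : ℝ :=
  (∑ k : Fin m, s (S k).1 (C (S k).2)) / m

/-- Population score `U^s(C) = E_{i ~ 𝓓_𝓘, o ~ 𝓜(i)}[s(o, C(i))]`. -/
def popScore {I : Type*} {N : ℕ} (DI : PMF I) (M : I → PMF (LO N))
    (s : LO N → LO N → ℝ) (C : I → LO N) : ℝ :=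
  ∑' i, (DI i).toReal * ∑ o : LO N, (M i o).toReal * s o (C i)

/-!
For a fixed profile `C`, the sample score is the empirical mean of `m` i.i.d. variables with
values in `[-B, B]` and mean `U^s(C)`, so by Hoeffding's inequality it is `ε`-close to `U^s(C)`
except with probability `2 exp (-m ε² / (2 B²))`. A union bound over the `(N!)^|𝓘| ≤ N^(N |𝓘|)`
profiles makes this closeness uniform, and then a maximizer of the sample score loses at most
`2 ε` in population score against every `C ∈ 𝓒`.
-/

open MeasureTheory ProbabilityTheory

theorem prob_mono {α : Type*} (p : PMF α) {s t : Set α} (h : s ⊆ t) : prob p s ≤ prob p t :=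
  p.toOuterMeasure.mono h

theorem iidPMF_apply {α : Type*} (p : PMF α) : ∀ (m : ℕ) (S : Fin m → α),
    iidPMF p m S = ∏ k, p (S k)
  | 0, S => by simp [iidPMF, Subsingleton.elim S (fun i => i.elim0)]
  | m + 1, S => by
    classical
    obtain ⟨b, T, rfl⟩ : ∃ (b : α) (T : Fin m → α), S = Fin.cons b T :=
      ⟨S 0, Fin.tail S, (Fin.cons_self_tail S).symm⟩
    have hmap (a : α) : (iidPMF p m).map (Fin.cons (α := fun _ => α) a) (Fin.cons b T) =
        if b = a then iidPMF p m T else 0 := by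
      rw [PMF.map_apply]
      by_cases h : b = a <;> simp [Fin.cons_inj, h]
    rw [iidPMF, PMF.bind_apply,
      tsum_eq_single b fun a ha => by rw [hmap, if_neg (Ne.symm ha), mul_zero],
      hmap, if_pos rfl, iidPMF_apply p m T, Fin.prod_univ_succ]
    simp

section Hoeffding

variable {α : Type*} [Fintype α] [MeasurableSpace α] [MeasurableSingletonClass α]

theorem toMeasure_iidPMF (p : PMF α) (m : ℕ) :
    (iidPMF p m).toMeasure = Measure.pi fun _ => p.toMeasure := by
  classical
  refine (Measure.pi_eq fun s _ => ?_).symm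
  have hbox : Set.univ.pi s = ↑(Fintype.piFinset fun k => (s k).toFinset) := by ext; simp
  rw [hbox, PMF.toMeasure_apply_finset]
  simp_rw [iidPMF_apply, ← Finset.prod_univ_sum, ← PMF.toMeasure_apply_finset, Set.coe_toFinset]

theorem measureReal_iidPMF_sum_sub_integral_ge_le (p : PMF α) {f : α → ℝ} {B : ℝ}
    (hf : ∀ x, |f x| ≤ B) (m : ℕ) {ε : ℝ} (hε : 0 ≤ ε) :
    (iidPMF p m).toMeasure.real {S | m * ε ≤ ∑ k, (f (S k) - ∫ x, f x ∂p.toMeasure)} ≤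
      Real.exp (-(m * ε ^ 2) / (2 * B ^ 2)) := by
  set g : α → ℝ := fun x => f x - ∫ x, f x ∂p.toMeasure
  have hg : HasSubgaussianMGF g ((‖B - -B‖₊ / 2) ^ 2) p.toMeasure :=
    hasSubgaussianMGF_of_mem_Icc Measurable.of_discrete.aemeasurable
      (ae_of_all _ fun x => abs_le.1 (hf x))
  rw [toMeasure_iidPMF]
  have hoeffding := HasSubgaussianMGF.measure_sum_ge_le_of_iIndepFun (s := Finset.univ)
    (iIndepFun_pi (μ := fun _ : Fin m => p.toMeasure) (X := fun _ => g)
      fun _ => Measurable.of_discrete.aemeasurable)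
    (fun k _ => HasSubgaussianMGF.of_map (X := g)
      (measurePreserving_eval (fun _ => p.toMeasure) k).measurable.aemeasurable
      (by rwa [(measurePreserving_eval (fun _ => p.toMeasure) k).map_eq]))
    (by positivity : 0 ≤ (m : ℝ) * ε)
  convert hoeffding using 2
  simp only [Finset.sum_const, Finset.card_univ, Fintype.card_fin, nsmul_eq_mul]
  push_cast
  rw [Real.norm_eq_abs, sub_neg_eq_add, ← two_mul, abs_mul, abs_two,
    mul_div_cancel_left₀ _ two_ne_zero, sq_abs]
  rcases m.eq_zero_or_pos with rfl | hm
  · simp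
  · field_simp

theorem measureReal_iidPMF_exists_abs_sum_sub_integral_ge_le {ι : Type*} [Fintype ι]
    (p : PMF α) {f : ι → α → ℝ} {B : ℝ} (hf : ∀ j x, |f j x| ≤ B) (m : ℕ) {ε : ℝ}
    (hε : 0 ≤ ε) :
    (iidPMF p m).toMeasure.real
        {S | ∃ j, m * ε ≤ |∑ k, (f j (S k) - ∫ x, f j x ∂p.toMeasure)|} ≤
      2 * Fintype.card ι * Real.exp (-(m * ε ^ 2) / (2 * B ^ 2)) := by
  set μ := (iidPMF p m).toMeasure
  have hcover : {S : Fin m → α | ∃ j, m * ε ≤ |∑ k, (f j (S k) - ∫ x, f j x ∂p.toMeasure)|} ⊆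
      ⋃ j, ({S : Fin m → α | m * ε ≤ ∑ k, (f j (S k) - ∫ x, f j x ∂p.toMeasure)} ∪
        {S : Fin m → α | m * ε ≤ ∑ k, (-f j (S k) - ∫ x, -f j x ∂p.toMeasure)}) := by
    rintro S ⟨j, hj⟩
    refine Set.mem_iUnion.2 ⟨j, (le_abs'.1 hj).symm.imp id fun h => ?_⟩
    have hneg : ∑ k, (-f j (S k) - ∫ x, -f j x ∂p.toMeasure) =
        -∑ k, (f j (S k) - ∫ x, f j x ∂p.toMeasure) := by
      simp only [integral_neg, ← Finset.sum_neg_distrib, neg_sub, sub_neg_eq_add, neg_add_eq_sub]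
    change (m : ℝ) * ε ≤ _
    linarith
  calc μ.real _ ≤ _ := measureReal_mono hcover
    _ ≤ ∑ j, (μ.real {S | m * ε ≤ ∑ k, (f j (S k) - ∫ x, f j x ∂p.toMeasure)} +
        μ.real {S | m * ε ≤ ∑ k, (-f j (S k) - ∫ x, -f j x ∂p.toMeasure)}) :=
      (measureReal_iUnion_fintype_le _).trans
        (Finset.sum_le_sum fun j _ => measureReal_union_le _ _)
    _ ≤ ∑ _ : ι, 2 * Real.exp (-(m * ε ^ 2) / (2 * B ^ 2)) := by
      gcongr with j
      rw [two_mul]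
      exact add_le_add (measureReal_iidPMF_sum_sub_integral_ge_le p (hf j) m hε)
        (measureReal_iidPMF_sum_sub_integral_ge_le p
          (fun x => (abs_neg _).trans_le (hf j x)) m hε)
    _ = _ := by simp only [Finset.sum_const, Finset.card_univ, nsmul_eq_mul]; ring

end Hoeffding

theorem ofReal_le_prob_iidPMF_forall_abs_sum_sub_lt {ι α : Type*} [Fintype ι] [Fintype α]
    (p : PMF α) {f : ι → α → ℝ} {B : ℝ} (hf : ∀ j x, |f j x| ≤ B) (m : ℕ) {ε : ℝ}
    (hε : 0 ≤ ε) :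
    ENNReal.ofReal (1 - 2 * Fintype.card ι * Real.exp (-(m * ε ^ 2) / (2 * B ^ 2))) ≤
      prob (iidPMF p m) {S | ∀ j, |∑ k, (f j (S k) - ∑ x, (p x).toReal * f j x)| < m * ε} := by
  -- With the discrete σ-algebra, `prob` is the measure `PMF.toMeasure`.
  let _ : MeasurableSpace α := ⊤
  have hgood : {S : Fin m → α | ∀ j, |∑ k, (f j (S k) - ∑ x, (p x).toReal * f j x)| < m * ε} =
      {S | ∃ j, m * ε ≤ |∑ k, (f j (S k) - ∫ x, f j x ∂p.toMeasure)|}ᶜ := by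
    ext S
    simp [PMF.integral_eq_sum]
  rw [prob, ← PMF.toMeasure_apply_eq_toOuterMeasure, hgood, ← ofReal_measureReal,
    probReal_compl_eq_one_sub MeasurableSet.of_discrete]
  gcongr
  exact measureReal_iidPMF_exists_abs_sum_sub_integral_ge_le p hf m hε

theorem mul_exp_neg_le_of_log_add_log_one_div_le {a δ t : ℝ} (ha : 0 < a) (hδ : 0 < δ)
    (h : Real.log a + Real.log (1 / δ) ≤ t) : a * Real.exp (-t) ≤ δ := by
  calc a * Real.exp (-t) = δ * Real.exp (Real.log a + Real.log (1 / δ) - t) := by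
        rw [Real.exp_sub, Real.exp_add, Real.exp_log ha, Real.exp_log (by positivity),
          Real.exp_neg]
        field_simp
    _ ≤ δ * 1 := by gcongr; exact Real.exp_le_one_iff.2 (by linarith)
    _ = δ := mul_one δ

theorem ciSup_sub_two_mul_le_of_abs_sub_le {β : Type*} {𝓒 : Set β} (h𝓒 : 𝓒.Nonempty)
    {U Û : β → ℝ} {c : β} {ε : ℝ} (hc : ∀ C ∈ 𝓒, Û C ≤ Û c) (hdev : ∀ C, |Û C - U C| ≤ ε) :
    (⨆ C : 𝓒, U C) - 2 * ε ≤ U c := by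
  have := h𝓒.to_subtype
  rw [sub_le_iff_le_add]
  refine ciSup_le fun C => ?_
  have hC := abs_le.1 (hdev C)
  have hc' := abs_le.1 (hdev c)
  linarith [hc C C.2]

section Profiles

variable {I : Type*} {N : ℕ}

theorem sampleDist_apply (DI : PMF I) (M : I → PMF (LO N)) (o : LO N) (i : I) :
    sampleDist DI M (o, i) = DI i * M i o := by
  classical
  simp only [sampleDist, PMF.bind_apply, PMF.map_apply, Prod.mk.injEq]
  rw [tsum_eq_single i fun j hj => by simp [Ne.symm hj]]
  simp

theorem popScore_eq_sum [Fintype I] (DI : PMF I) (M : I → PMF (LO N)) (s : LO N → LO N → ℝ)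
    (C : I → LO N) :
    popScore DI M s C = ∑ x, (sampleDist DI M x).toReal * s x.1 (C x.2) := by
  simp only [popScore, tsum_fintype, Fintype.sum_prod_type, sampleDist_apply, ENNReal.toReal_mul,
    Finset.mul_sum, mul_assoc]
  exact Finset.sum_comm

theorem sampleScore_sub_eq (s : LO N → LO N → ℝ) {m : ℕ} (hm : m ≠ 0) (S : Fin m → LO N × I)
    (C : I → LO N) (u : ℝ) :
    sampleScore s S C - u = (∑ k, (s (S k).1 (C (S k).2) - u)) / m := by
  rw [sampleScore, Finset.sum_sub_distrib, Finset.sum_const, Finset.card_univ, Fintype.card_fin,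
    nsmul_eq_mul]
  field_simp

variable [Fintype I] [DecidableEq I]

theorem log_card_profile_le : Real.log (Fintype.card (I → LO N)) ≤
    Fintype.card I * N * Real.log N := by
  rw [Fintype.card_fun, Fintype.card_perm, Fintype.card_fin, Nat.cast_pow, Real.log_pow,
    mul_assoc]
  gcongr
  calc Real.log (N.factorial) ≤ Real.log ((N : ℝ) ^ N) :=
        Real.log_le_log (by positivity) (by exact_mod_cast N.factorial_le_pow)
    _ = N * Real.log N := Real.log_pow N N

theorem two_mul_card_profile_mul_exp_le [Nonempty I] (hN : 2 ≤ N) {B ε δ : ℝ} (hB : 0 < B)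
    (hε : 0 < ε) (hδ0 : 0 < δ) (hδ1 : δ < 1) {m : ℕ}
    (hm : 4 * B ^ 2 / ε ^ 2 * (Fintype.card I * N * Real.log N + Real.log (1 / δ)) ≤ m) :
    2 * Fintype.card (I → LO N) * Real.exp (-(m * ε ^ 2) / (2 * B ^ 2)) ≤ δ := by
  set A := (Fintype.card I : ℝ) * N * Real.log N
  have hlog2 : Real.log 2 ≤ A := by
    have hI : (1 : ℝ) ≤ Fintype.card I := by exact_mod_cast Fintype.card_pos
    have hN' : (2 : ℝ) ≤ N := by exact_mod_cast hN
    calc Real.log 2 ≤ 1 * 1 * Real.log N := by simpa using Real.log_le_log two_pos hN'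
      _ ≤ (Fintype.card I : ℝ) * N * Real.log N := by
        gcongr
        linarith [Real.log_pos one_lt_two]
  have hL : 0 < Real.log (1 / δ) := Real.log_pos (by rw [one_div]; exact one_lt_inv₀ hδ0 |>.2 hδ1)
  rw [neg_div]
  refine mul_exp_neg_le_of_log_add_log_one_div_le (by positivity) hδ0 ?_
  rw [Real.log_mul two_ne_zero (by positivity), le_div_iff₀ (by positivity)]
  calc (Real.log 2 + Real.log (Fintype.card (I → LO N)) + Real.log (1 / δ)) * (2 * B ^ 2)
      ≤ 2 * (A + Real.log (1 / δ)) * (2 * B ^ 2) := by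
        gcongr
        linarith [log_card_profile_le (I := I) (N := N)]
    _ = 4 * B ^ 2 / ε ^ 2 * (A + Real.log (1 / δ)) * ε ^ 2 := by field_simp; ring
    _ ≤ m * ε ^ 2 := by gcongr

end Profiles

/-- **Scoring mechanisms approximately maximize population score.** Suppose the issue set
`I` is finite. For every bound `B > 0` there is a constant `c > 0` (depending only on `B`)
such that for every scoring rule `s` bounded by `B`, every scoring mechanism `fs`
(maximizing the sample score over `𝓒`), every `ε > 0`, `δ ∈ (0,1)`, and every sample size
`m ≥ (c/ε²)·(|I|·N·log N + log(1/δ))`: with probability at least `1 - δ` over an i.i.d.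
sample `S` of size `m`, `U^s(fs(S)) ≥ sup_{C ∈ 𝓒} U^s(C) - 2ε`. -/
theorem scoring_mechanisms_approximately_maximize_population_score (B : ℝ) (hB : 0 < B) :
    ∃ c : ℝ, 0 < c ∧
      ∀ (I : Type) (_ : Fintype I) (N : ℕ), 2 ≤ N →
        ∀ 𝓒 : Set (I → LO N), 𝓒.Nonempty →
          ∀ DI : PMF I, (∀ i : I, DI i ≠ 0) →
            ∀ (M : I → PMF (LO N)) (s : LO N → LO N → ℝ),
              (∀ o o' : LO N, |s o o'| ≤ B) →
              ∀ fs : ∀ m : ℕ, (Fin m → LO N × I) → (I → LO N),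
                (∀ (m : ℕ) (S : Fin m → LO N × I), fs m S ∈ 𝓒 ∧
                  ∀ C ∈ 𝓒, sampleScore s S C ≤ sampleScore s S (fs m S)) →
                ∀ ε δ : ℝ, 0 < ε → 0 < δ → δ < 1 →
                  ∀ m : ℕ,
                    c / ε ^ 2 * ((Fintype.card I : ℝ) * N * Real.log N + Real.log (1 / δ))
                      ≤ m →
                    ENNReal.ofReal (1 - δ) ≤
                      prob (iidPMF (sampleDist DI M) m)
                        {S | (⨆ C : 𝓒, popScore DI M s C.1) - 2 * ε ≤
                          popScore DI M s (fs m S)} := by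
  classical
  refine ⟨4 * B ^ 2, by positivity, ?_⟩
  intro I _ N hN 𝓒 h𝓒 DI _ M s hs fs hfs ε δ hε hδ0 hδ1 m hm
  have : Nonempty I := ⟨DI.support_nonempty.some⟩
  have hfail := two_mul_card_profile_mul_exp_le hN hB hε hδ0 hδ1 hm
  have hm0 : m ≠ 0 := by
    rintro rfl
    have : (1 : ℝ) ≤ Fintype.card (I → LO N) := by exact_mod_cast Fintype.card_pos
    simp only [CharP.cast_eq_zero, zero_mul, neg_zero, zero_div, Real.exp_zero, mul_one] at hfail
    linarith
  have huniform := ofReal_le_prob_iidPMF_forall_abs_sum_sub_lt (sampleDist DI M)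
    (f := fun (C : I → LO N) (x : LO N × I) => s x.1 (C x.2)) (fun _ _ => hs _ _) m hε.le
  simp only [← popScore_eq_sum] at huniform
  calc ENNReal.ofReal (1 - δ) ≤ _ := le_trans (ENNReal.ofReal_le_ofReal (by linarith)) huniform
    _ ≤ _ := prob_mono _ fun S hS => ciSup_sub_two_mul_le_of_abs_sub_le h𝓒 (hfs m S).2 fun C => by
        rw [sampleScore_sub_eq s hm0, abs_div, Nat.abs_cast, div_le_iff₀ (by positivity)]
        exact (hS C).le.trans_eq (mul_comm _ _)
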